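/- Define the s-ordering of x ∈ ℝ³ by taking x̂ = (|x₁|,|x₂|,|x₃|) sorted decreasingly and then setting the third component's sign to sgn(x₁x₂x₃), and say x ≺_s y if x₁^{↓s} ≤ y₁^{↓s}, x₁^{↓s}+x₂^{↓s}+x₃^{↓s} ≤ y₁^{↓s}+y₂^{↓s}+y₃^{↓s}, and x₁^{↓s}+x₂^{↓s}−x₃^{↓s} ≤ y₁^{↓s}+y₂^{↓s}−y₃^{↓s}. Then for any a' ∈ ℝ³ with all entries in [−π/2, π/2] and any z ∈ ℤ³ with some |zᵢ| > 1, it holds that a' + π·(0,0,0) ≺_s a' + π·z. -/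

import Mathlib

/-!
Every s-ordered entry of `a'` has absolute value at most `π/2`, so each of the three partial
sums defining `a' ≺_s ·` is at most `3π/2`. On the other side, some entry of `a' + πz` has
absolute value at least `2π - π/2 = 3π/2`; it bounds the largest s-ordered entry from below,
and the other two s-ordered entries `v₂, v₃` contribute `v₂ ± v₃ ≥ 0`, since `|v₃| ≤ v₂`.
-/

/-- The entries of `x` rearranged in decreasing order. -/
noncomputable def sortDesc {k : ℕ} (x : Fin k → ℝ) : Fin k → ℝ :=
  fun i => x (Tuple.sort x i.rev)

/-- The s-ordered version of `x ∈ ℝ³`: sort `(|x₁|,|x₂|,|x₃|)` decreasingly and give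
the smallest entry the sign `sgn(x₁x₂x₃)`. -/
noncomputable def sOrder (x : Fin 3 → ℝ) : Fin 3 → ℝ := fun i =>
  if i = 2 then Real.sign (x 0 * x 1 * x 2) * sortDesc (fun j => |x j|) 2
  else sortDesc (fun j => |x j|) i

/-- s-majorization `x ≺_s y` on `ℝ³`. -/
def SMaj (x y : Fin 3 → ℝ) : Prop :=
  sOrder x 0 ≤ sOrder y 0 ∧
  sOrder x 0 + sOrder x 1 + sOrder x 2 ≤ sOrder y 0 + sOrder y 1 + sOrder y 2 ∧
  sOrder x 0 + sOrder x 1 - sOrder x 2 ≤ sOrder y 0 + sOrder y 1 - sOrder y 2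

lemma sortDesc_antitone {k : ℕ} (x : Fin k → ℝ) : Antitone (sortDesc x) :=
  fun _ _ hij => Tuple.monotone_sort x (Fin.rev_le_rev.mpr hij)

lemma le_sortDesc_zero {k : ℕ} (x : Fin (k + 1) → ℝ) (j : Fin (k + 1)) :
    x j ≤ sortDesc x 0 := by
  have h := Tuple.monotone_sort x (Fin.le_last ((Tuple.sort x)⁻¹ j))
  simpa [sortDesc, Fin.rev_zero] using h

lemma sortDesc_le {k : ℕ} {x : Fin k → ℝ} {c : ℝ} (h : ∀ j, x j ≤ c) (i : Fin k) :
    sortDesc x i ≤ c :=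
  h _

lemma sortDesc_nonneg {k : ℕ} {x : Fin k → ℝ} (h : ∀ j, 0 ≤ x j) (i : Fin k) :
    0 ≤ sortDesc x i :=
  h _

lemma Real.abs_sign_le_one (r : ℝ) : |Real.sign r| ≤ 1 := by
  rcases Real.sign_apply_eq r with h | h | h <;> simp [h]

lemma abs_sOrder_two_le (x : Fin 3 → ℝ) :
    |sOrder x 2| ≤ sortDesc (fun j => |x j|) 2 := by
  have hnn := sortDesc_nonneg (fun j => abs_nonneg (x j)) 2
  rw [sOrder, if_pos rfl, abs_mul, abs_of_nonneg hnn]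
  exact mul_le_of_le_one_left hnn (Real.abs_sign_le_one _)

lemma abs_sOrder_le {x : Fin 3 → ℝ} {c : ℝ} (h : ∀ j, |x j| ≤ c) (i : Fin 3) :
    |sOrder x i| ≤ c := by
  by_cases hi : i = 2
  · subst hi
    exact (abs_sOrder_two_le x).trans (sortDesc_le h 2)
  · rw [sOrder, if_neg hi, abs_of_nonneg (sortDesc_nonneg (fun j => abs_nonneg (x j)) i)]
    exact sortDesc_le h i

lemma le_sOrder_zero (x : Fin 3 → ℝ) (j : Fin 3) : |x j| ≤ sOrder x 0 :=
  le_sortDesc_zero (fun j => |x j|) j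

lemma abs_sOrder_two_le_sOrder_one (x : Fin 3 → ℝ) : |sOrder x 2| ≤ sOrder x 1 :=
  (abs_sOrder_two_le x).trans (sortDesc_antitone _ (by decide : (1 : Fin 3) ≤ 2))

lemma sMaj_of_three_mul_le_abs {x y : Fin 3 → ℝ} {c : ℝ} (hx : ∀ i, |x i| ≤ c) {j : Fin 3}
    (hy : 3 * c ≤ |y j|) : SMaj x y := by
  have habs := abs_sOrder_le hx
  have hy0 := hy.trans (le_sOrder_zero y j)
  have hy12 := abs_le.mp (abs_sOrder_two_le_sOrder_one y)
  have hc : 0 ≤ c := (abs_nonneg _).trans (hx 0)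
  have h0 := (abs_le.mp (habs 0)).2
  have h1 := (abs_le.mp (habs 1)).2
  have h2 := abs_le.mp (habs 2)
  exact ⟨by linarith, by linarith, by linarith⟩

lemma three_mul_pi_div_two_le_abs_add_pi_mul {a : ℝ} (ha : |a| ≤ Real.pi / 2) {n : ℤ}
    (hn : 1 < |n|) : 3 * (Real.pi / 2) ≤ |a + Real.pi * n| := by
  have hn2 : (2 : ℝ) ≤ |(n : ℝ)| := by
    rw [← Int.cast_abs]
    exact_mod_cast hn
  have hpin : 2 * Real.pi ≤ |Real.pi * n| := by
    rw [abs_mul, abs_of_pos Real.pi_pos]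
    nlinarith [Real.pi_pos]
  have := abs_sub_abs_le_abs_add (Real.pi * n) a
  rw [add_comm] at this
  linarith

/-- If some `|zᵢ| > 1` then `a' ≺_s a' + πz` (for `a'` with entries in `[−π/2, π/2]`). -/
theorem stmt17 (a : Fin 3 → ℝ) (ha : ∀ i, |a i| ≤ Real.pi / 2)
    (z : Fin 3 → ℤ) (hz : ∃ i, 1 < |z i|) :
    SMaj a (fun i => a i + Real.pi * z i) := by
  obtain ⟨i, hi⟩ := hz
  exact sMaj_of_three_mul_le_abs ha (three_mul_pi_div_two_le_abs_add_pi_mul (ha i) hi)
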